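/- The function K defined on (0, ∞) by K(x) = (√π/2) · (e^{−x²}/x) · erfi(x), where erfi(x) = (2/√π) ∫₀ˣ e^{t²} dt, is strictly decreasing on (0, ∞): for all real numbers x, y with 0 < x < y, K(y) < K(x). -/

import Mathlib

open Real

/-- The imaginary error function `erfi x = (2/√π) ∫₀ˣ e^{t²} dt`. -/
noncomputable def erfi (x : ℝ) : ℝ :=
  (2 / Real.sqrt π) * ∫ t in (0:ℝ)..x, Real.exp (t ^ 2)

/-- `K x = (√π/2) · (e^{−x²}/x) · erfi x`. -/
noncomputable def K (x : ℝ) : ℝ :=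
  (Real.sqrt π / 2) * (Real.exp (-x ^ 2) / x) * erfi x

/-!
Substituting `t = x s` in `erfi` gives `K x = ∫₀¹ exp (-x² (1 - s²)) ds`. For `s ∈ [0, 1]` the
integrand is antitone in `x > 0`, and strictly so at `s = 0`, so `K` is strictly decreasing.
-/

open intervalIntegral

theorem K_eq_integral {x : ℝ} (hx : x ≠ 0) :
    K x = ∫ s in (0:ℝ)..1, exp (-(x ^ 2 * (1 - s ^ 2))) := by
  have hπ : sqrt π ≠ 0 := (sqrt_pos.2 pi_pos).ne'
  have hsubst := smul_integral_comp_mul_left (fun t => exp (t ^ 2)) x (a := 0) (b := 1)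
  simp only [mul_zero, mul_one, smul_eq_mul] at hsubst
  have hK : K x = exp (-x ^ 2) * ∫ s in (0:ℝ)..1, exp ((x * s) ^ 2) := by
    rw [K, erfi, ← hsubst]
    field_simp
  rw [hK, ← integral_const_mul]
  congr 1 with s
  rw [← exp_add]
  ring_nf

/-- `K` is strictly decreasing on `(0, ∞)`. -/
theorem K_strictAntiOn : ∀ x y : ℝ, 0 < x → x < y → K y < K x := by
  intro x y hx hxy
  rw [K_eq_integral hx.ne', K_eq_integral (hx.trans hxy).ne']
  refine integral_lt_integral_of_continuousOn_of_le_of_exists_lt zero_lt_one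
    (by fun_prop) (by fun_prop) (fun s hs => ?_) ⟨0, by simp, ?_⟩
  · have : 0 ≤ 1 - s ^ 2 := by nlinarith [hs.1, hs.2]
    gcongr
  · simpa using pow_lt_pow_left₀ hxy hx.le two_ne_zero
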